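/- arXiv:1606.03132 — 2 statements merged into one kernel-verified Lean document; each statement's English description precedes it below -/
import Mathlib

section
/- If S has no conjugate points, then for every x, y ∈ ℝ^d and every integer N ≥ 1, there exists a unique extremal sequence (x_n)_{n∈ℤ} with x_0 = x and x_N = y. -/
noncomputable section

/-- Configuration space `ℝ^d` with the Euclidean norm. -/
abbrev Ed (d : ℕ) := EuclideanSpace ℝ (Fin d)

/-- The point of `ℝ^d` with integer coordinates given by `r ∈ ℤ^d`. -/
def intVec (d : ℕ) (r : Fin d → ℤ) : Ed d := WithLp.toLp 2 (fun i => (r i : ℝ))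

/-- A generating function: a `C²` map `S : ℝ^d × ℝ^d → ℝ` which is `ℤ^d`-periodic for
the diagonal action and satisfies the uniform twist condition
`∑_{i,j} ∂²S/∂xᵢ∂yⱼ (x,y) ξᵢ ξⱼ ≤ -A‖ξ‖²` (expressed via the second derivative of `S`
applied to `((ξ,0),(0,ξ))`). -/
def IsGenFn {d : ℕ} (S : Ed d × Ed d → ℝ) : Prop :=
  ContDiff ℝ 2 S ∧
  (∀ (r : Fin d → ℤ) (x y : Ed d), S (x + intVec d r, y + intVec d r) = S (x, y)) ∧
  ∃ A : ℝ, 0 < A ∧ ∀ (x y ξ : Ed d),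
    iteratedFDeriv ℝ 2 S (x, y) ![(ξ, 0), (0, ξ)] ≤ -A * ‖ξ‖ ^ 2

/-- `∂₁S`, the partial differential of `S` with respect to its first variable. -/
def D1 {d : ℕ} (S : Ed d × Ed d → ℝ) (x y : Ed d) : Ed d →L[ℝ] ℝ :=
  fderiv ℝ (fun z => S (z, y)) x

/-- `∂₂S`, the partial differential of `S` with respect to its second variable. -/
def D2 {d : ℕ} (S : Ed d × Ed d → ℝ) (x y : Ed d) : Ed d →L[ℝ] ℝ :=
  fderiv ℝ (fun z => S (x, z)) y

/-- A bi-infinite sequence `(x_n)_{n∈ℤ}` is extremal if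
`∂₂S(x_{n-1}, x_n) + ∂₁S(x_n, x_{n+1}) = 0` for every `n`. -/
def IsExtremal {d : ℕ} (S : Ed d × Ed d → ℝ) (u : ℤ → Ed d) : Prop :=
  ∀ n : ℤ, D2 S (u (n - 1)) (u n) + D1 S (u n) (u (n + 1)) = 0

/-- The action `S(x_0, …, x_n)` of a finite sequence. -/
def act {d : ℕ} (S : Ed d × Ed d → ℝ) (n : ℕ) (γ : ℕ → Ed d) : ℝ :=
  ∑ k ∈ Finset.range n, S (γ k, γ (k + 1))

/-- The sequence `(x, z_1, …, z_{N-1}, y)` built from interior points `z`. -/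
def path {d : ℕ} (x y : Ed d) (N : ℕ) (z : Fin (N - 1) → Ed d) : ℕ → Ed d :=
  fun k => if h0 : k = 0 then x else if h : k < N then z ⟨k - 1, by omega⟩ else y

/-- The fixed-endpoint action `S_{x,y,N} : (x_1, …, x_{N-1}) ↦ S(x, x_1, …, x_{N-1}, y)`. -/
def fixedAct {d : ℕ} (S : Ed d × Ed d → ℝ) (x y : Ed d) (N : ℕ) :
    (Fin (N - 1) → Ed d) → ℝ :=
  fun z => act S N (path x y N z)

/-- `S` has no conjugate points: for all `x, y` and `N ≥ 2`, the fixed-endpoint action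
`S_{x,y,N}` has exactly one critical point, and attains its global minimum there. -/
def NoConjPts {d : ℕ} (S : Ed d × Ed d → ℝ) : Prop :=
  ∀ (x y : Ed d) (N : ℕ), 2 ≤ N →
    ∃ z : Fin (N - 1) → Ed d,
      fderiv ℝ (fixedAct S x y N) z = 0 ∧
      (∀ w, fixedAct S x y N z ≤ fixedAct S x y N w) ∧
      (∀ z', fderiv ℝ (fixedAct S x y N) z' = 0 → z' = z)

/-- `A_N(x,y)`: the minimum of the fixed-endpoint action `S_{x,y,N}` for `N ≥ 2`,
and `S(x,y)` for `N = 1`. -/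
def AN {d : ℕ} (S : Ed d × Ed d → ℝ) (N : ℕ) (x y : Ed d) : ℝ :=
  if N ≤ 1 then S (x, y) else sInf (Set.range (fixedAct S x y N))

/-- The minimizing holonomic value `Σ̃(S)`. -/
def holVal {d : ℕ} (S : Ed d × Ed d → ℝ) : ℝ :=
  sInf { v : ℝ | ∃ n : ℕ, 1 ≤ n ∧ ∃ γ : ℕ → Ed d,
    (∃ r : Fin d → ℤ, γ n - γ 0 = intVec d r) ∧ v = act S n γ / n }

/-- The normalized action `S̃(x_0, …, x_n) = S(x_0, …, x_n) - n Σ̃(S)`. -/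
def actTilde {d : ℕ} (S : Ed d × Ed d → ℝ) (n : ℕ) (γ : ℕ → Ed d) : ℝ :=
  act S n γ - n * holVal S

/-- The Mañé potential `π(x,y)`. -/
def manePot {d : ℕ} (S : Ed d × Ed d → ℝ) (x y : Ed d) : ℝ :=
  sInf { v : ℝ | ∃ n : ℕ, 1 ≤ n ∧ ∃ γ : ℕ → Ed d,
    γ 0 = x ∧ (∃ r : Fin d → ℤ, γ n - y = intVec d r) ∧ v = actTilde S n γ }

/-- The Aubry set `Ā(S) ⊂ ℝ^d × ℝ^d`. -/
def aubry {d : ℕ} (S : Ed d × Ed d → ℝ) : Set (Ed d × Ed d) :=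
  { p | ∀ ε > 0, ∃ n : ℕ, 1 ≤ n ∧ ∃ γ : ℕ → Ed d,
      (∃ r : Fin d → ℤ, γ n - γ 0 = intVec d r) ∧
      ‖p.1 - γ 0‖ < ε ∧ ‖p.2 - γ 1‖ < ε ∧ actTilde S n γ < ε }

/-- The generating function `S_c(x,y) = S(x,y) + c(x - y)` associated to a cohomology
class `c ∈ (ℝ^d)*`. -/
def Sc {d : ℕ} (S : Ed d × Ed d → ℝ) (c : Ed d →L[ℝ] ℝ) : Ed d × Ed d → ℝ :=
  fun p => S p + c (p.1 - p.2)

/-!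
The twist condition makes `c ↦ ∂₁S(b, c)` and `a ↦ ∂₂S(a, b)` strongly monotone maps
`ℝ^d → (ℝ^d)*`; being open (inverse function theorem) and proper (antilipschitz), they are
bijections. Hence the extremal equation `∂₂S(a, b) + ∂₁S(b, c) = 0` determines `c` from `(a, b)`
and `a` from `(b, c)`: extremal sequences are the orbits of the map
`(x_{n-1}, x_n) ↦ (x_n, x_{n+1})`, determined by `(x_0, x_1)`. The critical points of `S_{x,y,N}`
are exactly the interiors of the segments `x = x_0, …, x_N = y` satisfying the extremal equation,
so having no conjugate points leaves exactly one admissible `x_1`.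
-/

open Function Set ContinuousLinearMap

section StronglyMonotone

variable {E : Type*} [NormedAddCommGroup E] [NormedSpace ℝ E]
  {F : E → StrongDual ℝ E} {A : ℝ}

theorem sub_apply_sub_le_of_fderiv_apply_self_le (hF : Differentiable ℝ F)
    (hmono : ∀ y ξ, fderiv ℝ F y ξ ξ ≤ -A * ‖ξ‖ ^ 2) (y₁ y₂ : E) :
    (F y₂ - F y₁) (y₂ - y₁) ≤ -A * ‖y₂ - y₁‖ ^ 2 := by
  set ξ := y₂ - y₁
  have hφ : ∀ t : ℝ, HasDerivAt (fun t : ℝ => F (y₁ + t • ξ) ξ)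
      (fderiv ℝ F (y₁ + t • ξ) ξ ξ) t := by
    intro t
    have hline : HasDerivAt (fun t : ℝ => y₁ + t • ξ) ξ t := by
      simpa using ((hasDerivAt_id t).smul_const ξ).const_add y₁
    exact (ContinuousLinearMap.apply ℝ ℝ ξ).hasFDerivAt.comp_hasDerivAt t
      ((hF _).hasFDerivAt.comp_hasDerivAt t hline)
  obtain ⟨c, -, hc⟩ := exists_hasDerivAt_eq_slope _ _ zero_lt_one
    (fun t _ => (hφ t).continuousAt.continuousWithinAt) (fun t _ => hφ t)
  have h := hmono (y₁ + c • ξ) ξ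
  rw [hc, one_smul, zero_smul, add_zero, add_sub_cancel y₁ y₂, sub_zero, div_one] at h
  rwa [sub_apply]

theorem antilipschitzWith_of_fderiv_apply_self_le (hA : 0 < A) (hF : Differentiable ℝ F)
    (hmono : ∀ y ξ, fderiv ℝ F y ξ ξ ≤ -A * ‖ξ‖ ^ 2) :
    AntilipschitzWith (Real.toNNReal A⁻¹) F := by
  refine AntilipschitzWith.of_le_mul_dist fun y₂ y₁ => ?_
  rw [Real.coe_toNNReal _ (by positivity), dist_eq_norm, dist_eq_norm, le_inv_mul_iff₀ hA]
  have hle : A * ‖y₂ - y₁‖ ^ 2 ≤ ‖F y₂ - F y₁‖ * ‖y₂ - y₁‖ := by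
    have h := sub_apply_sub_le_of_fderiv_apply_self_le hF hmono y₁ y₂
    have := neg_le_abs ((F y₂ - F y₁) (y₂ - y₁))
    rw [← Real.norm_eq_abs] at this
    have := (F y₂ - F y₁).le_opNorm (y₂ - y₁)
    linarith
  rcases (norm_nonneg (y₂ - y₁)).eq_or_lt with h0 | hpos
  · rw [← h0]; simp
  · nlinarith

theorem bijective_of_fderiv_apply_self_le [FiniteDimensional ℝ E] (hA : 0 < A)
    (hF : ContDiff ℝ 1 F) (hmono : ∀ y ξ, fderiv ℝ F y ξ ξ ≤ -A * ‖ξ‖ ^ 2) :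
    Bijective F := by
  have hanti := antilipschitzWith_of_fderiv_apply_self_le hA (hF.differentiable one_ne_zero) hmono
  have hinj : ∀ y, Injective (fderiv ℝ F y) := fun y =>
    (antilipschitzWith_of_fderiv_apply_self_le (F := fderiv ℝ F y) hA
      (fderiv ℝ F y).differentiable (by simpa using hmono y)).injective
  refine ⟨hanti.injective, ?_⟩
  have hdim : Module.finrank ℝ E = Module.finrank ℝ (StrongDual ℝ E) := by
    rw [← Subspace.dual_finrank_eq]
    exact (LinearMap.toContinuousLinearMap : Module.Dual ℝ E ≃ₗ[ℝ] StrongDual ℝ E).finrank_eq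
  have hopen : IsOpen (range F) :=
    (isOpenMap_of_hasStrictFDerivAt_equiv (f' := fun y =>
      ((fderiv ℝ F y : E →ₗ[ℝ] StrongDual ℝ E).linearEquivOfInjective (hinj y)
        hdim).toContinuousLinearEquiv)
      fun y => hF.contDiffAt.hasStrictFDerivAt one_ne_zero).isOpen_range
  have hclosed : IsClosed (range F) := by
    refine (isProperMap_iff_tendsto_cocompact.mpr ⟨hF.continuous, ?_⟩).isClosed_range
    rw [← Metric.cobounded_eq_cocompact, ← Metric.cobounded_eq_cocompact]
    exact hanti.tendsto_cobounded
  exact range_eq_univ.mp (IsClopen.eq_univ ⟨hclosed, hopen⟩ (range_nonempty F))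

end StronglyMonotone

section GenFn

variable {d : ℕ} {S : Ed d × Ed d → ℝ}

theorem D1_eq (hS : Differentiable ℝ S) (a b : Ed d) :
    D1 S a b = (fderiv ℝ S (a, b)).comp (inl ℝ (Ed d) (Ed d)) :=
  ((hS _).hasFDerivAt.comp a (hasFDerivAt_prodMk_left a b)).fderiv

theorem D2_eq (hS : Differentiable ℝ S) (a b : Ed d) :
    D2 S a b = (fderiv ℝ S (a, b)).comp (inr ℝ (Ed d) (Ed d)) :=
  ((hS _).hasFDerivAt.comp b (hasFDerivAt_prodMk_right a b)).fderiv

theorem bijective_D1 (hS : ContDiff ℝ 2 S) {A : ℝ} (hA : 0 < A)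
    (htwist : ∀ x y ξ : Ed d, iteratedFDeriv ℝ 2 S (x, y) ![(ξ, 0), (0, ξ)] ≤ -A * ‖ξ‖ ^ 2)
    (b : Ed d) : Bijective (D1 S b) := by
  have hS' : ContDiff ℝ 1 (fderiv ℝ S) := hS.fderiv_right (by norm_num)
  set Φ := (compL ℝ (Ed d) (Ed d × Ed d) ℝ).flip (inl ℝ (Ed d) (Ed d))
  have hD : D1 S b = fun c => Φ (fderiv ℝ S (b, c)) :=
    funext (D1_eq (hS.differentiable (by norm_num)) b)
  have hderiv : ∀ c, HasFDerivAt (D1 S b)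
      (Φ.comp ((fderiv ℝ (fderiv ℝ S) (b, c)).comp (inr ℝ (Ed d) (Ed d)))) c := fun c => by
    rw [hD]
    exact Φ.hasFDerivAt.comp c
      ((hS'.differentiable one_ne_zero _).hasFDerivAt.comp c (hasFDerivAt_prodMk_right b c))
  refine bijective_of_fderiv_apply_self_le hA ?_ fun c ξ => ?_
  · rw [hD]; fun_prop
  · rw [(hderiv c).fderiv]
    change fderiv ℝ (fderiv ℝ S) (b, c) (0, ξ) (ξ, 0) ≤ _
    rw [hS.contDiffAt.isSymmSndFDerivAt (by simp)]
    simpa [iteratedFDeriv_two_apply] using htwist b c ξ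

theorem bijective_D2 (hS : ContDiff ℝ 2 S) {A : ℝ} (hA : 0 < A)
    (htwist : ∀ x y ξ : Ed d, iteratedFDeriv ℝ 2 S (x, y) ![(ξ, 0), (0, ξ)] ≤ -A * ‖ξ‖ ^ 2)
    (b : Ed d) : Bijective (fun a => D2 S a b) := by
  have hS' : ContDiff ℝ 1 (fderiv ℝ S) := hS.fderiv_right (by norm_num)
  set Φ := (compL ℝ (Ed d) (Ed d × Ed d) ℝ).flip (inr ℝ (Ed d) (Ed d))
  have hD : (fun a => D2 S a b) = fun a => Φ (fderiv ℝ S (a, b)) :=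
    funext fun a => D2_eq (hS.differentiable (by norm_num)) a b
  have hderiv : ∀ a, HasFDerivAt (fun a => D2 S a b)
      (Φ.comp ((fderiv ℝ (fderiv ℝ S) (a, b)).comp (inl ℝ (Ed d) (Ed d)))) a := fun a => by
    rw [hD]
    exact Φ.hasFDerivAt.comp a
      ((hS'.differentiable one_ne_zero _).hasFDerivAt.comp a (hasFDerivAt_prodMk_left a b))
  refine bijective_of_fderiv_apply_self_le hA ?_ fun a ξ => ?_
  · rw [hD]; fun_prop
  · rw [(hderiv a).fderiv]
    change fderiv ℝ (fderiv ℝ S) (a, b) (ξ, 0) (0, ξ) ≤ _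
    simpa [iteratedFDeriv_two_apply] using htwist a b ξ

end GenFn

theorem sum_range_succ_add_reindex {M : Type*} [AddCommMonoid M] (f g : ℕ → M) (n : ℕ)
    (hf : f 0 = 0) (hg : g n = 0) :
    ∑ k ∈ Finset.range (n + 1), (f k + g k) = ∑ k ∈ Finset.range n, (g k + f (k + 1)) := by
  rw [Finset.sum_add_distrib, Finset.sum_range_succ' f, Finset.sum_range_succ g, hf, hg,
    add_zero, add_zero, add_comm, ← Finset.sum_add_distrib]

section FixedAct

variable {d : ℕ} {S : Ed d × Ed d → ℝ} {x y : Ed d} {N : ℕ}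

theorem path_zero (z : Fin (N - 1) → Ed d) : path x y N z 0 = x := rfl

theorem path_of_pos_of_lt (z : Fin (N - 1) → Ed d) {k : ℕ} (h0 : 0 < k) (hk : k < N) :
    path x y N z k = z ⟨k - 1, by omega⟩ := by
  simp [path, h0.ne', hk]

theorem path_self (hN : 1 ≤ N) (z : Fin (N - 1) → Ed d) : path x y N z N = y := by
  simp [path, show N ≠ 0 by omega]

theorem path_succ (z : Fin (N - 1) → Ed d) (j : Fin (N - 1)) :
    path x y N z (j + 1) = z j :=
  path_of_pos_of_lt z j.val.succ_pos (by omega)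

def pathDeriv (d N k : ℕ) : (Fin (N - 1) → Ed d) →L[ℝ] Ed d :=
  if h : 0 < k ∧ k < N then ContinuousLinearMap.proj (⟨k - 1, by omega⟩ : Fin (N - 1)) else 0

theorem pathDeriv_apply (k : ℕ) (v : Fin (N - 1) → Ed d) :
    pathDeriv d N k v = path 0 0 N v k := by
  unfold pathDeriv path
  by_cases h0 : k = 0 <;> by_cases hk : k < N <;> simp [h0, hk, Nat.pos_iff_ne_zero]

theorem hasFDerivAt_path (z : Fin (N - 1) → Ed d) (k : ℕ) :
    HasFDerivAt (fun z => path x y N z k) (pathDeriv d N k) z := by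
  unfold pathDeriv path
  by_cases h0 : k = 0
  · simpa [h0] using hasFDerivAt_const x z
  by_cases hk : k < N
  · simpa [h0, hk, Nat.pos_iff_ne_zero] using hasFDerivAt_apply (𝕜 := ℝ) ⟨k - 1, by omega⟩ z
  · simpa [h0, hk] using hasFDerivAt_const y z

theorem fderiv_apply_eq_D1_add_D2 (hS : Differentiable ℝ S) (a b p q : Ed d) :
    fderiv ℝ S (a, b) (p, q) = D1 S a b p + D2 S a b q := by
  have hpq : (p, q) = inl ℝ (Ed d) (Ed d) p + inr ℝ (Ed d) (Ed d) q := by simp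
  rw [D1_eq hS, D2_eq hS, hpq, map_add]
  rfl

theorem hasFDerivAt_fixedAct (hS : Differentiable ℝ S) (z : Fin (N - 1) → Ed d) :
    HasFDerivAt (fixedAct S x y N)
      (∑ k ∈ Finset.range N, (fderiv ℝ S (path x y N z k, path x y N z (k + 1))).comp
        ((pathDeriv d N k).prod (pathDeriv d N (k + 1)))) z :=
  show HasFDerivAt (fun z => ∑ k ∈ Finset.range N, S (path x y N z k, path x y N z (k + 1))) _ z
  from HasFDerivAt.fun_sum fun k _ => (hS _).hasFDerivAt.comp z
    ((hasFDerivAt_path z k).prodMk (hasFDerivAt_path z (k + 1)))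

theorem fderiv_fixedAct_apply (hS : Differentiable ℝ S) (hN : 1 ≤ N)
    (z v : Fin (N - 1) → Ed d) :
    fderiv ℝ (fixedAct S x y N) z v = ∑ j : Fin (N - 1),
      (D2 S (path x y N z j) (path x y N z (j + 1))
        + D1 S (path x y N z (j + 1)) (path x y N z (j + 2))) (v j) := by
  obtain ⟨n, rfl⟩ : ∃ n, N = n + 1 := ⟨N - 1, by omega⟩
  rw [(hasFDerivAt_fixedAct hS z).fderiv, sum_apply]
  simp only [ContinuousLinearMap.comp_apply, ContinuousLinearMap.prod_apply,
    fderiv_apply_eq_D1_add_D2 hS, pathDeriv_apply]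
  rw [sum_range_succ_add_reindex _ _ _ (by simp [path_zero]) (by simp [path_self]),
    ← Fin.sum_univ_eq_sum_range]
  refine Finset.sum_congr rfl fun j _ => ?_
  simp only [path_succ, add_apply]

end FixedAct

section Recurrence

variable {α : Type*} {R : α → α → α → Prop}

theorem eq_of_recurrence_of_le (hR : ∀ a b, ∃! c, R a b c) {N : ℕ} {u v : ℕ → α}
    (hu : ∀ k, k + 2 ≤ N → R (u k) (u (k + 1)) (u (k + 2)))
    (hv : ∀ k, k + 2 ≤ N → R (v k) (v (k + 1)) (v (k + 2)))
    (h0 : u 0 = v 0) (h1 : u 1 = v 1) : ∀ k ≤ N, u k = v k := by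
  intro k
  induction k using Nat.twoStepInduction with
  | zero => exact fun _ => h0
  | one => exact fun _ => h1
  | more k ih₀ ih₁ =>
    intro hk
    have h := hv k hk
    rw [← ih₀ (by omega), ← ih₁ (by omega)] at h
    exact (hR _ _).unique (hu k hk) h

variable (hR : ∀ a b, ∃! c, R a b c) (hL : ∀ b c, ∃! a, R a b c)

def stepEquiv : α × α ≃ α × α where
  toFun p := (p.2, (hR p.1 p.2).exists.choose)
  invFun p := ((hL p.1 p.2).exists.choose, p.1)
  left_inv _ := Prod.ext
    ((hL _ _).unique (hL _ _).exists.choose_spec (hR _ _).exists.choose_spec) rfl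
  right_inv _ := Prod.ext rfl
    ((hR _ _).unique (hR _ _).exists.choose_spec (hL _ _).exists.choose_spec)

section

variable {hR hL}

theorem stepEquiv_apply {a b c : α} (h : R a b c) : stepEquiv hR hL (a, b) = (b, c) :=
  Prod.ext rfl ((hR a b).unique (hR a b).exists.choose_spec h)

theorem stepEquiv_zpow_succ (p : α × α) (n : ℤ) :
    (stepEquiv hR hL ^ (n + 1)) p = stepEquiv hR hL ((stepEquiv hR hL ^ n) p) := by
  rw [add_comm, zpow_add, zpow_one, Equiv.Perm.mul_apply]

theorem stepEquiv_zpow_apply {u : ℤ → α} (hu : ∀ n, R (u (n - 1)) (u n) (u (n + 1))) (n : ℤ) :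
    (stepEquiv hR hL ^ n) (u 0, u 1) = (u n, u (n + 1)) := by
  have hstep : ∀ m, stepEquiv hR hL (u m, u (m + 1)) = (u (m + 1), u (m + 1 + 1)) := fun m =>
    stepEquiv_apply (by simpa using hu (m + 1))
  have hup : ∀ m, (stepEquiv hR hL ^ m) (u 0, u 1) = (u m, u (m + 1)) →
      (stepEquiv hR hL ^ (m + 1)) (u 0, u 1) = (u (m + 1), u (m + 1 + 1)) := fun m ih => by
    rw [stepEquiv_zpow_succ, ih, hstep]
  have hdown : ∀ m, (stepEquiv hR hL ^ m) (u 0, u 1) = (u m, u (m + 1)) →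
      (stepEquiv hR hL ^ (m - 1)) (u 0, u 1) = (u (m - 1), u (m - 1 + 1)) := fun m ih => by
    apply (stepEquiv hR hL).injective
    rw [← stepEquiv_zpow_succ, hstep, sub_add_cancel, ih]
  induction n using Int.induction_on with
  | zero => rfl
  | succ i ih => exact hup _ ih
  | pred i ih => exact hdown _ ih

end

include hR hL in
theorem existsUnique_int_recurrence (a b : α) :
    ∃! u : ℤ → α, (∀ n, R (u (n - 1)) (u n) (u (n + 1))) ∧ u 0 = a ∧ u 1 = b := by
  set T := stepEquiv hR hL
  refine ⟨fun n => ((T ^ n) (a, b)).1, ⟨fun n => ?_, rfl, rfl⟩, ?_⟩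
  · obtain ⟨m, rfl⟩ : ∃ m, n = m + 1 := ⟨n - 1, (sub_add_cancel n 1).symm⟩
    simp only [add_sub_cancel_right, stepEquiv_zpow_succ, T]
    exact (hR _ _).exists.choose_spec
  · rintro v ⟨hv, rfl, rfl⟩
    funext n
    rw [stepEquiv_zpow_apply hv]

end Recurrence

section Extremal

variable {d : ℕ} {S : Ed d × Ed d → ℝ}

def IsExtremalStep (S : Ed d × Ed d → ℝ) (a b c : Ed d) : Prop :=
  D2 S a b + D1 S b c = 0

def IsExtremalPath (S : Ed d × Ed d → ℝ) (x y : Ed d) (N : ℕ) (z : Fin (N - 1) → Ed d) : Prop :=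
  ∀ k, k + 2 ≤ N →
    IsExtremalStep S (path x y N z k) (path x y N z (k + 1)) (path x y N z (k + 2))

theorem existsUnique_isExtremalStep_right (hS : ContDiff ℝ 2 S) {A : ℝ} (hA : 0 < A)
    (htwist : ∀ x y ξ : Ed d, iteratedFDeriv ℝ 2 S (x, y) ![(ξ, 0), (0, ξ)] ≤ -A * ‖ξ‖ ^ 2)
    (a b : Ed d) : ∃! c, IsExtremalStep S a b c := by
  simpa only [IsExtremalStep, add_eq_zero_iff_eq_neg'] using
    (bijective_D1 hS hA htwist b).existsUnique (-D2 S a b)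

theorem existsUnique_isExtremalStep_left (hS : ContDiff ℝ 2 S) {A : ℝ} (hA : 0 < A)
    (htwist : ∀ x y ξ : Ed d, iteratedFDeriv ℝ 2 S (x, y) ![(ξ, 0), (0, ξ)] ≤ -A * ‖ξ‖ ^ 2)
    (b c : Ed d) : ∃! a, IsExtremalStep S a b c := by
  simpa only [IsExtremalStep, add_eq_zero_iff_eq_neg] using
    (bijective_D2 hS hA htwist b).existsUnique (-D1 S b c)

theorem fderiv_fixedAct_eq_zero_iff (hS : Differentiable ℝ S) {x y : Ed d} {N : ℕ} (hN : 1 ≤ N)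
    (z : Fin (N - 1) → Ed d) :
    fderiv ℝ (fixedAct S x y N) z = 0 ↔ IsExtremalPath S x y N z := by
  constructor
  · intro hz k hk
    ext η
    set i : Fin (N - 1) := ⟨k, by omega⟩
    have h := congr($hz (Pi.single i η))
    rw [fderiv_fixedAct_apply hS hN, Finset.sum_eq_single_of_mem i (Finset.mem_univ _)
      fun j _ hj => by simp [hj]] at h
    simpa using h
  · intro hz
    ext v
    rw [fderiv_fixedAct_apply hS hN]
    exact Finset.sum_eq_zero fun j _ => by rw [hz j (by omega)]; rfl

theorem NoConjPts.existsUnique_extremal_path (h : NoConjPts S) (hS : Differentiable ℝ S)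
    (x y : Ed d) {N : ℕ} (hN : 1 ≤ N) :
    ∃! z : Fin (N - 1) → Ed d, IsExtremalPath S x y N z := by
  rcases (show N = 1 ∨ 2 ≤ N by omega) with rfl | hN2
  · exact ⟨finZeroElim, fun k hk => by omega, fun _ _ => funext (·.elim0)⟩
  · obtain ⟨z, hz, -, hz_unique⟩ := h x y N hN2
    exact ⟨z, (fderiv_fixedAct_eq_zero_iff hS hN z).1 hz,
      fun z' hz' => hz_unique z' ((fderiv_fixedAct_eq_zero_iff hS hN z').2 hz')⟩

theorem IsExtremal.isExtremalStep_nat {u : ℤ → Ed d} (hu : IsExtremal S u) (k : ℕ) :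
    IsExtremalStep S (u k) (u (k + 1 : ℕ)) (u (k + 2 : ℕ)) := by
  simpa [IsExtremalStep, add_assoc, one_add_one_eq_two] using hu (k + 1)

theorem path_eq_of_endpoints {x y : Ed d} {N : ℕ} {u : ℤ → Ed d} (hu0 : u 0 = x)
    (huN : u N = y) {k : ℕ} (hk : k ≤ N) :
    path x y N (fun j => u (j + 1 : ℕ)) k = u k := by
  rcases Nat.eq_zero_or_pos k with rfl | hk0
  · exact hu0.symm
  rcases hk.lt_or_eq with hkN | rfl
  · rw [path_of_pos_of_lt _ hk0 hkN, Nat.sub_add_cancel hk0]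
  · exact (path_self hk0 _).trans huN.symm

theorem IsExtremal.apply_one_eq_path_iff (hR : ∀ a b, ∃! c, IsExtremalStep S a b c)
    {x y : Ed d} {N : ℕ} (hN : 1 ≤ N) {z : Fin (N - 1) → Ed d} (hz : IsExtremalPath S x y N z)
    (hz_unique : ∀ z', IsExtremalPath S x y N z' → z' = z)
    {u : ℤ → Ed d} (hu : IsExtremal S u) (hu0 : u 0 = x) :
    u 1 = path x y N z 1 ↔ u N = y := by
  constructor
  · intro hu1
    rw [eq_of_recurrence_of_le hR (u := fun k : ℕ => u k) (fun k _ => hu.isExtremalStep_nat k)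
      hz hu0 hu1 N le_rfl, path_self hN]
  · intro huN
    have hpath : ∀ k ≤ N, path x y N (fun j => u (j + 1 : ℕ)) k = u k :=
      fun k hk => path_eq_of_endpoints hu0 huN hk
    have hzu : (fun j : Fin (N - 1) => u (j + 1 : ℕ)) = z := hz_unique _ fun k hk => by
      rw [hpath k (by omega), hpath (k + 1) (by omega), hpath (k + 2) hk]
      exact hu.isExtremalStep_nat k
    rw [← hzu, hpath 1 hN]
    rfl

end Extremal

theorem stmt_4_general (d : ℕ) (S : Ed d × Ed d → ℝ) (hS : IsGenFn S)
    (h : NoConjPts S) :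
    ∀ (x y : Ed d) (N : ℕ), 1 ≤ N →
      ∃! u : ℤ → Ed d, IsExtremal S u ∧ u 0 = x ∧ u (N : ℤ) = y := by
  obtain ⟨hC2, -, A, hA, htwist⟩ := hS
  intro x y N hN
  have hR := existsUnique_isExtremalStep_right hC2 hA htwist
  have hL := existsUnique_isExtremalStep_left hC2 hA htwist
  obtain ⟨z, hz, hz_unique⟩ :=
    h.existsUnique_extremal_path (hC2.differentiable (by norm_num)) x y hN
  refine (existsUnique_congr fun u => ?_).1
    (existsUnique_int_recurrence hR hL x (path x y N z 1))
  exact and_congr_right fun hu => and_congr_right fun hu0 =>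
    IsExtremal.apply_one_eq_path_iff hR hN hz hz_unique hu hu0

/-- If `S` has no conjugate points, then for every `x, y ∈ ℝ^d` and every `N ≥ 1`,
there exists a unique extremal sequence `(x_n)_{n∈ℤ}` with `x_0 = x` and `x_N = y`. -/
theorem stmt_4 (d : ℕ) (hd : 1 ≤ d) (S : Ed d × Ed d → ℝ) (hS : IsGenFn S)
    (h : NoConjPts S) :
    ∀ (x y : Ed d) (N : ℕ), 1 ≤ N →
      ∃! u : ℤ → Ed d, IsExtremal S u ∧ u 0 = x ∧ u (N : ℤ) = y :=
  stmt_4_general d S hS h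

end
end

section
/- Let c ∈ (ℝ^d)*. Let (x,y) ∈ Ā_c and let z ∈ ℝ^d be the point determined by ∂₂S(x,y) + ∂₁S(y,z) = 0 (so that (y,z) is the image of (x,y) under the shift map φ). Then Σ̃_c ≥ S(x,y) + S(y,z) − S(x,z). -/
noncomputable section

/-!
Take a loop of almost minimal normalized `S_c`-action through points near `(x, y)`, traversed
twice so that it has a third point; call its first three points `a, b, v`. Replacing `b` by an
arbitrary point, or deleting it, again gives closed loops, whose mean action is at least `Σ̃_c`.
Hence `S(a,b) + S(b,v) - S(a,v) < Σ̃_c + ε`, and `b` almost minimizes `w ↦ S(a,w) + S(w,v)`, so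
a penalized minimization finds `w` near `b` with `∂₂S(a,w) + ∂₁S(w,v)` small. The twist makes
`v ↦ ∂₁S(w,v)` uniformly injective, which forces `v → z` as `ε → 0`, and the bound passes to
the limit. The twist also gives `S_c` a quadratic lower bound; without it `Σ̃_c`, an infimum,
could be a junk value.
-/

open Filter Topology Set

section Periodic

variable {d : ℕ}

def IsDiagPeriodic (F : Ed d × Ed d → ℝ) : Prop :=
  ∀ (r : Fin d → ℤ) (x y : Ed d), F (x + intVec d r, y + intVec d r) = F (x, y)

lemma exists_norm_sub_intVec_le (w : Ed d) : ∃ r : Fin d → ℤ, ‖w - intVec d r‖ ≤ √d := by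
  refine ⟨fun i => ⌊w i⌋, ?_⟩
  have hfract : ∀ i, ‖(w - intVec d fun i => ⌊w i⌋) i‖ ^ 2 ≤ 1 := by
    intro i
    have hi : (w - intVec d fun i => ⌊w i⌋) i = Int.fract (w i) := by simp [intVec]
    rw [hi, Real.norm_eq_abs, sq_abs]
    nlinarith [Int.fract_nonneg (w i), Int.fract_lt_one (w i)]
  calc ‖w - intVec d fun i => ⌊w i⌋‖ = √(∑ i, ‖(w - intVec d fun i => ⌊w i⌋) i‖ ^ 2) :=
        EuclideanSpace.norm_eq _
    _ ≤ √(∑ _i : Fin d, (1 : ℝ)) := Real.sqrt_le_sqrt (Finset.sum_le_sum fun i _ => hfract i)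
    _ = √d := by simp

lemma bddAbove_range_of_periodic {h : Ed d → ℝ} (hc : Continuous h)
    (hp : ∀ (r : Fin d → ℤ) (w : Ed d), h (w + intVec d r) = h w) : BddAbove (range h) := by
  refine ((isCompact_closedBall (0 : Ed d) √d).bddAbove_image hc.continuousOn).mono ?_
  rintro _ ⟨w, rfl⟩
  obtain ⟨r, hr⟩ := exists_norm_sub_intVec_le w
  exact ⟨w - intVec d r, by simpa using hr, by simpa using (hp r (w - intVec d r)).symm⟩

end Periodic

section Calculus

variable {E : Type*} [NormedAddCommGroup E] [NormedSpace ℝ E]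

lemma fderiv_add_apply_sub_le {f : E → ℝ} (hf : ContDiff ℝ 2 f) {e e' : E} {C : ℝ}
    (hC : ∀ q, fderiv ℝ (fderiv ℝ f) q e e' ≤ C) (p : E) :
    fderiv ℝ f (p + e) e' - fderiv ℝ f p e' ≤ C := by
  have hf' : Differentiable ℝ (fderiv ℝ f) :=
    (hf.fderiv_right (m := 1) (by norm_num)).differentiable (by norm_num)
  have hφ : ∀ t : ℝ, HasDerivAt (fun s : ℝ => fderiv ℝ f (p + s • e) e')
      (fderiv ℝ (fderiv ℝ f) (p + t • e) e e') t := by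
    intro t
    have hline : HasDerivAt (fun s : ℝ => p + s • e) e t := by
      simpa using ((hasDerivAt_id t).smul_const e).const_add p
    simpa using ((hf' _).hasFDerivAt.comp_hasDerivAt t hline).clm_apply (hasDerivAt_const t e')
  have h := image_sub_le_mul_sub_of_deriv_le (fun t => (hφ t).differentiableAt)
    (fun t => (hφ t).deriv ▸ hC _) zero_le_one
  simpa using h

lemma le_sub_of_linear_le_deriv {φ φ' : ℝ → ℝ} (hφ : ∀ t, HasDerivAt φ (φ' t) t) {a b : ℝ}
    (h : ∀ t ∈ Ioo (0 : ℝ) 1, a * t + b ≤ φ' t) : a / 2 + b ≤ φ 1 - φ 0 := by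
  have hψ : ∀ t, HasDerivAt (fun s => φ s - (a / 2 * s ^ 2 + b * s)) (φ' t - (a * t + b)) t := by
    intro t
    have hquad := ((hasDerivAt_pow 2 t).const_mul (a / 2)).add ((hasDerivAt_id' t).const_mul b)
    exact ((hφ t).sub hquad).congr_deriv (by norm_num; ring)
  have hmono := monotoneOn_of_deriv_nonneg (convex_Icc (0 : ℝ) 1)
    (fun t _ => (hψ t).continuousAt.continuousWithinAt)
    (fun t _ => (hψ t).differentiableAt.differentiableWithinAt)
    (fun t ht => by rw [(hψ t).deriv]; rw [interior_Icc] at ht; linarith [h t ht])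
  have := hmono (left_mem_Icc.2 zero_le_one) (right_mem_Icc.2 zero_le_one) zero_le_one
  linarith

end Calculus

section Twist

variable {d : ℕ} {S : Ed d × Ed d → ℝ} {A : ℝ}

def IsTwist (S : Ed d × Ed d → ℝ) (A : ℝ) : Prop :=
  ∀ x y ξ : Ed d, iteratedFDeriv ℝ 2 S (x, y) ![(ξ, 0), (0, ξ)] ≤ -A * ‖ξ‖ ^ 2

lemma hasFDerivAt_D1 (hS : Differentiable ℝ S) (u v : Ed d) :
    HasFDerivAt (fun w => S (w, v)) (D1 S u v) u :=
  ((hS _).comp u (differentiableAt_id.prodMk (differentiableAt_const v))).hasFDerivAt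

lemma hasFDerivAt_D2 (hS : Differentiable ℝ S) (u v : Ed d) :
    HasFDerivAt (fun w => S (u, w)) (D2 S u v) v :=
  ((hS _).comp v ((differentiableAt_const u).prodMk differentiableAt_id)).hasFDerivAt

lemma D1_eq_comp_inl (hS : Differentiable ℝ S) (u v : Ed d) :
    D1 S u v = (fderiv ℝ S (u, v)).comp (.inl ℝ (Ed d) (Ed d)) :=
  ((hS (u, v)).hasFDerivAt.comp u (hasFDerivAt_prodMk_left u v)).fderiv

lemma D2_eq_comp_inr (hS : Differentiable ℝ S) (u v : Ed d) :
    D2 S u v = (fderiv ℝ S (u, v)).comp (.inr ℝ (Ed d) (Ed d)) :=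
  ((hS (u, v)).hasFDerivAt.comp v (hasFDerivAt_prodMk_right u v)).fderiv

lemma continuous_D1 (hS : ContDiff ℝ 1 S) : Continuous fun p : Ed d × Ed d => D1 S p.1 p.2 := by
  simp only [D1_eq_comp_inl (hS.differentiable one_ne_zero)]
  exact (hS.continuous_fderiv one_ne_zero).clm_comp continuous_const

lemma continuous_D2 (hS : ContDiff ℝ 1 S) : Continuous fun p : Ed d × Ed d => D2 S p.1 p.2 := by
  simp only [D2_eq_comp_inr (hS.differentiable one_ne_zero)]
  exact (hS.continuous_fderiv one_ne_zero).clm_comp continuous_const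

lemma D2_add_sub_apply_le (hS : ContDiff ℝ 2 S)
    (htw : IsTwist S A)
    (u v ξ : Ed d) : (D2 S (u + ξ) v - D2 S u v) ξ ≤ -A * ‖ξ‖ ^ 2 := by
  have h := fderiv_add_apply_sub_le hS (e := (ξ, 0)) (e' := (0, ξ))
    (fun q => by simpa [iteratedFDeriv_two_apply] using htw q.1 q.2 ξ) (u, v)
  simpa [D2_eq_comp_inr (hS.differentiable two_ne_zero)] using h

lemma D1_add_sub_apply_le (hS : ContDiff ℝ 2 S)
    (htw : IsTwist S A)
    (u v ξ : Ed d) : (D1 S u (v + ξ) - D1 S u v) ξ ≤ -A * ‖ξ‖ ^ 2 := by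
  have h := fderiv_add_apply_sub_le hS (e := (0, ξ)) (e' := (ξ, 0)) (fun q => by
    rw [hS.contDiffAt.isSymmSndFDerivAt (by simp)]
    simpa [iteratedFDeriv_two_apply] using htw q.1 q.2 ξ) (u, v)
  simpa [D1_eq_comp_inl (hS.differentiable two_ne_zero)] using h

lemma mul_norm_sub_le_norm_D1_sub (hS : ContDiff ℝ 2 S)
    (htw : IsTwist S A)
    (u v v' : Ed d) : A * ‖v' - v‖ ≤ ‖D1 S u v' - D1 S u v‖ := by
  rcases (norm_nonneg (v' - v)).eq_or_lt with h0 | hpos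
  · rw [← h0, mul_zero]
    exact norm_nonneg _
  have hmono := D1_add_sub_apply_le hS htw u v (v' - v)
  rw [add_sub_cancel] at hmono
  have hle := neg_le_of_abs_le ((D1 S u v' - D1 S u v).le_opNorm (v' - v))
  nlinarith

lemma tendsto_of_tendsto_D1 (hS : ContDiff ℝ 2 S)
    (htw : IsTwist S A)
    (hA : 0 < A) {ι : Type*} {l : Filter ι} {w v : ι → Ed d} {y z : Ed d}
    (hw : Tendsto w l (𝓝 y)) (hD : Tendsto (fun k => D1 S (w k) (v k)) l (𝓝 (D1 S y z))) :
    Tendsto v l (𝓝 z) := by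
  have hDz : Tendsto (fun k => D1 S (w k) z) l (𝓝 (D1 S y z)) :=
    ((continuous_D1 (hS.of_le one_le_two)).tendsto (y, z)).comp (hw.prodMk_nhds tendsto_const_nhds)
  have hgap : Tendsto (fun k => ‖D1 S (w k) (v k) - D1 S (w k) z‖ / A) l (𝓝 0) := by
    simpa using ((hD.sub hDz).norm).div_const A
  refine tendsto_iff_norm_sub_tendsto_zero.2
    (squeeze_zero (fun _ => norm_nonneg _) (fun k => ?_) hgap)
  rw [le_div_iff₀ hA, mul_comm]
  exact mul_norm_sub_le_norm_D1_sub hS htw _ _ _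

end Twist

section LowerBound

variable {d : ℕ} {S : Ed d × Ed d → ℝ} {A : ℝ}

lemma D2_apply_add_smul_le (hS : ContDiff ℝ 2 S)
    (htw : IsTwist S A)
    (u w δ : Ed d) {t : ℝ} (ht : 0 < t) :
    D2 S (u + t • δ) w δ + A * t * ‖δ‖ ^ 2 ≤ D2 S u w δ := by
  have h := D2_add_sub_apply_le hS htw u w (t • δ)
  simp only [map_smul, sub_apply, smul_eq_mul, norm_smul,
    Real.norm_eq_abs, abs_of_pos ht] at h
  nlinarith

lemma diag_add_sq_sub_le_of_twist (hS : ContDiff ℝ 2 S)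
    (htw : IsTwist S A)
    {K : ℝ} (hK : ∀ w, ‖D2 S w w‖ ≤ K) (u v : Ed d) :
    S (u, u) + A / 2 * ‖v - u‖ ^ 2 - K * ‖v - u‖ ≤ S (u, v) := by
  set δ := v - u
  have hφ : ∀ t : ℝ, HasDerivAt (fun s : ℝ => S (u, u + s • δ)) (D2 S u (u + t • δ) δ) t := by
    intro t
    have hline : HasDerivAt (fun s : ℝ => u + s • δ) δ t := by
      simpa using ((hasDerivAt_id t).smul_const δ).const_add u
    exact (hasFDerivAt_D2 (hS.differentiable two_ne_zero) u _).comp_hasDerivAt t hline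
  have hbound : ∀ t ∈ Ioo (0 : ℝ) 1, A * ‖δ‖ ^ 2 * t + -(K * ‖δ‖) ≤ D2 S u (u + t • δ) δ := by
    intro t ht
    have hdiag : -(K * ‖δ‖) ≤ D2 S (u + t • δ) (u + t • δ) δ :=
      neg_le_of_abs_le (((D2 S _ _).le_opNorm δ).trans (by gcongr; exact hK _))
    linarith [D2_apply_add_smul_le hS htw u (u + t • δ) δ ht.1]
  have h := le_sub_of_linear_le_deriv hφ hbound
  simp only [one_smul, zero_smul, add_zero, δ, add_sub_cancel] at h
  linarith

lemma D2_add_intVec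
    (hper : IsDiagPeriodic S)
    (r : Fin d → ℤ) (u v : Ed d) : D2 S (u + intVec d r) (v + intVec d r) = D2 S u v := by
  have hshift : (fun w => S (u + intVec d r, w)) = fun w => S (u, w - intVec d r) := by
    funext w
    simpa using hper r u (w - intVec d r)
  rw [D2, hshift, fderiv_comp_sub (f := fun w => S (u, w)), add_sub_cancel_right, D2]

lemma bddBelow_range_Sc (hS : IsGenFn S) (c : Ed d →L[ℝ] ℝ) : BddBelow (range (Sc S c)) := by
  obtain ⟨hC2, hper, A, hA, htw⟩ := hS
  obtain ⟨K, hK⟩ := bddAbove_range_of_periodic (h := fun w => ‖D2 S w w‖)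
    ((continuous_D2 (hC2.of_le one_le_two)).comp (continuous_id.prodMk continuous_id)).norm
    (fun r w => by rw [D2_add_intVec hper])
  obtain ⟨M, hM⟩ := bddAbove_range_of_periodic (h := fun w => -S (w, w))
    (hC2.continuous.comp (continuous_id.prodMk continuous_id)).neg
    (fun r w => by rw [hper])
  refine ⟨-M - (K + ‖c‖) ^ 2 / (2 * A), ?_⟩
  rintro _ ⟨⟨u, v⟩, rfl⟩
  have hS_ge := diag_add_sq_sub_le_of_twist hC2 htw (fun w => hK ⟨w, rfl⟩) u v
  have hdiag : -S (u, u) ≤ M := hM ⟨u, rfl⟩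
  have hc : -(‖c‖ * ‖v - u‖) ≤ c (u - v) :=
    neg_le_of_abs_le ((c.le_opNorm _).trans_eq (by rw [norm_sub_rev]))
  have hsq : 0 ≤ (A * ‖v - u‖ - (K + ‖c‖)) ^ 2 / (2 * A) := by positivity
  have hexpand : (A * ‖v - u‖ - (K + ‖c‖)) ^ 2 / (2 * A)
      = A / 2 * ‖v - u‖ ^ 2 - (K + ‖c‖) * ‖v - u‖ + (K + ‖c‖) ^ 2 / (2 * A) := by
    field_simp
    ring
  simp only [Sc]
  linarith

end LowerBound

section Loops

variable {d : ℕ} {F : Ed d × Ed d → ℝ}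

def IsLoop (n : ℕ) (γ : ℕ → Ed d) : Prop := ∃ r : Fin d → ℤ, γ n - γ 0 = intVec d r

lemma intVec_add (r r' : Fin d → ℤ) : intVec d (r + r') = intVec d r + intVec d r' := by
  ext i
  simp [intVec]

lemma mul_holVal_le_act (hF : BddBelow (range F)) {n : ℕ} (hn : 1 ≤ n) {γ : ℕ → Ed d}
    (hγ : IsLoop n γ) : n * holVal F ≤ act F n γ := by
  obtain ⟨C, hC⟩ := hF
  have h : holVal F ≤ act F n γ / n := by
    refine csInf_le ⟨C, ?_⟩ ⟨n, hn, γ, hγ, rfl⟩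
    rintro _ ⟨m, hm, γ', -, rfl⟩
    rw [le_div_iff₀ (by exact_mod_cast hm), mul_comm]
    simpa [act] using Finset.card_nsmul_le_sum (Finset.range m) _ C fun k _ => hC ⟨_, rfl⟩
  rwa [le_div_iff₀ (by exact_mod_cast hn), mul_comm] at h

lemma act_add_two (M : ℕ) (γ : ℕ → Ed d) :
    act F (M + 2) γ
      = ∑ k ∈ Finset.range M, F (γ (k + 2), γ (k + 3)) + F (γ 1, γ 2) + F (γ 0, γ 1) := by
  simp only [act, Finset.sum_range_succ']

lemma exists_loop_twice
    (hper : IsDiagPeriodic F)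
    {n : ℕ} (hn : 1 ≤ n) {γ : ℕ → Ed d} (hγ : IsLoop n γ) :
    ∃ δ : ℕ → Ed d, δ 0 = γ 0 ∧ δ 1 = γ 1 ∧ IsLoop (n + n) δ ∧
      act F (n + n) δ = 2 * act F n γ := by
  obtain ⟨r, hr⟩ := hγ
  set δ : ℕ → Ed d := fun k => if k ≤ n then γ k else γ (k - n) + intVec d r
  have hlow : ∀ k ≤ n, δ k = γ k := fun k hk => if_pos hk
  have hhigh : ∀ k, δ (n + k) = γ k + intVec d r := by
    rintro (_ | k)
    · simp only [δ, add_zero, le_refl, if_true]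
      rw [← hr, add_sub_cancel]
    · simp only [δ, if_neg (by omega : ¬ n + (k + 1) ≤ n), Nat.add_sub_cancel_left]
  refine ⟨δ, hlow 0 (Nat.zero_le n), hlow 1 hn, ⟨r + r, ?_⟩, ?_⟩
  · rw [hhigh, hlow 0 (Nat.zero_le n), intVec_add, ← hr]
    abel
  · rw [act, Finset.sum_range_add, two_mul]
    congr 1
    · exact Finset.sum_congr rfl fun k hk => by
        rw [hlow k (by simp at hk; omega), hlow (k + 1) (by simp at hk; omega)]
    · exact Finset.sum_congr rfl fun k _ => by
        rw [show n + k + 1 = n + (k + 1) by ring, hhigh, hhigh, hper]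

lemma add_lt_add_of_act_lt (hF : BddBelow (range F)) {N : ℕ} (hN : 2 ≤ N) {γ : ℕ → Ed d}
    (hγ : IsLoop N γ) {η : ℝ} (hact : act F N γ < N * holVal F + η) (w : Ed d) :
    F (γ 0, γ 1) + F (γ 1, γ 2) < F (γ 0, w) + F (w, γ 2) + η := by
  obtain ⟨M, rfl⟩ : ∃ M, N = M + 2 := ⟨N - 2, by omega⟩
  have hloop : IsLoop (M + 2) (Function.update γ 1 w) := by
    simpa [IsLoop, Function.update_of_ne] using hγ
  have h := mul_holVal_le_act hF (by omega) hloop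
  have htail : ∑ k ∈ Finset.range M,
      F (Function.update γ 1 w (k + 2), Function.update γ 1 w (k + 3))
        = ∑ k ∈ Finset.range M, F (γ (k + 2), γ (k + 3)) :=
    Finset.sum_congr rfl fun k _ => by
      rw [Function.update_of_ne (by omega), Function.update_of_ne (by omega)]
  rw [act_add_two, htail] at h
  rw [act_add_two] at hact
  simp only [Function.update_self, Function.update_of_ne zero_ne_one,
    Function.update_of_ne (by norm_num : (2 : ℕ) ≠ 1)] at h
  linarith

lemma sub_lt_holVal_add_of_act_lt (hF : BddBelow (range F)) {N : ℕ} (hN : 2 ≤ N)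
    {γ : ℕ → Ed d} (hγ : IsLoop N γ) {η : ℝ} (hact : act F N γ < N * holVal F + η) :
    F (γ 0, γ 1) + F (γ 1, γ 2) - F (γ 0, γ 2) < holVal F + η := by
  obtain ⟨M, rfl⟩ : ∃ M, N = M + 2 := ⟨N - 2, by omega⟩
  have hloop : IsLoop (M + 1) (Function.update (fun k => γ (k + 1)) 0 (γ 0)) := by
    simpa [IsLoop] using hγ
  have h := mul_holVal_le_act hF (by omega) hloop
  rw [act_add_two] at hact
  simp only [act, Finset.sum_range_succ', Function.update_self, ne_eq,
    Nat.add_eq_zero_iff, one_ne_zero, and_false, not_false_eq_true, Function.update_of_ne] at h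
  push_cast at h hact
  linarith

end Loops

section AlmostCritical

variable {E : Type*} [NormedAddCommGroup E] [InnerProductSpace ℝ E] [ProperSpace E]

/-- Minimize `g + (η / ρ²) ‖· - w₀‖²` over the closed ball of radius `ρ`: the penalty keeps the
minimizer off the boundary sphere, so it is a critical point. -/
lemma exists_dist_lt_norm_le_of_forall_lt_add {g : E → ℝ} {g' : E → E →L[ℝ] ℝ}
    (hg : ∀ w, HasFDerivAt g (g' w) w) {w₀ : E} {η ρ : ℝ} (hρ : 0 < ρ)
    (hmin : ∀ w, g w₀ < g w + η) : ∃ w, dist w w₀ < ρ ∧ ‖g' w‖ ≤ 2 * η / ρ := by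
  have hη : 0 < η := by linarith [hmin w₀]
  set κ := η / ρ ^ 2
  set G := fun w => g w + κ * ‖w - w₀‖ ^ 2
  have hG : ∀ w, HasFDerivAt G (g' w + κ • (2 • innerSL ℝ (w - w₀))) w := fun w => by
    have h := (hg w).add (((hasFDerivAt_id w).sub_const w₀).norm_sq.const_mul κ)
    rwa [ContinuousLinearMap.comp_id] at h
  obtain ⟨w, hw, hwmin⟩ := (isCompact_closedBall w₀ ρ).exists_isMinOn
    ⟨w₀, Metric.mem_closedBall_self hρ.le⟩ (fun w _ => (hG w).continuousAt.continuousWithinAt)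
  have hwball : dist w w₀ < ρ := by
    refine (Metric.mem_closedBall.1 hw).lt_of_ne fun hsphere => ?_
    have hGw : G w = g w + η := by
      simp only [G, κ, ← dist_eq_norm, hsphere]
      field_simp
    have hGw₀ : G w₀ = g w₀ := by simp [G]
    linarith [hmin w, isMinOn_iff.1 hwmin w₀ (Metric.mem_closedBall_self hρ.le)]
  have hcrit := (hwmin.isLocalMin (Metric.closedBall_mem_nhds_of_mem hwball)).hasFDerivAt_eq_zero
    (hG w)
  refine ⟨w, hwball, ?_⟩
  rw [eq_neg_of_add_eq_zero_left hcrit, norm_neg]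
  calc ‖κ • (2 • innerSL ℝ (w - w₀))‖ ≤ κ * (2 * ‖innerSL ℝ (w - w₀)‖) := by
        rw [norm_smul, Real.norm_of_nonneg (by positivity)]
        gcongr
        exact norm_nsmul_le
    _ ≤ κ * (2 * ρ) := by
        rw [innerSL_apply_norm, ← dist_eq_norm]
        gcongr
    _ = 2 * η / ρ := by
        simp only [κ]
        field_simp

end AlmostCritical

section Aubry

variable {d : ℕ} {S : Ed d × Ed d → ℝ}

lemma Sc_add_Sc (c : Ed d →L[ℝ] ℝ) (a b v : Ed d) :
    Sc S c (a, b) + Sc S c (b, v) = S (a, b) + S (b, v) + c (a - v) := by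
  simp only [Sc, map_sub]
  ring

lemma Sc_add_intVec (hper : IsDiagPeriodic S) (c : Ed d →L[ℝ] ℝ) (r : Fin d → ℤ) (u v : Ed d) :
    Sc S c (u + intVec d r, v + intVec d r) = Sc S c (u, v) := by
  simp only [Sc, hper r u v, add_sub_add_right_eq_sub]

lemma exists_approx_of_mem_aubry (hS : IsGenFn S) {c : Ed d →L[ℝ] ℝ} {x y : Ed d}
    (hxy : (x, y) ∈ aubry (Sc S c)) {ε : ℝ} (hε : 0 < ε) :
    ∃ a b w v : Ed d, dist a x < ε ∧ dist b y < ε ∧ dist w y < ε ∧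
      ‖D2 S a w + D1 S w v‖ ≤ ε ∧ S (a, b) + S (b, v) - S (a, v) < holVal (Sc S c) + ε := by
  have hF := bddBelow_range_Sc hS c
  have hd : Differentiable ℝ S := hS.1.differentiable two_ne_zero
  set η := min (ε / 2) (ε ^ 2 / 8)
  have hη : 0 < η := by positivity
  have hηε : η ≤ ε / 2 := min_le_left _ _
  have hηε2 : η ≤ ε ^ 2 / 8 := min_le_right _ _
  obtain ⟨n, hn, γ, hγ, hx, hy, hact⟩ := hxy η hη
  obtain ⟨δ, hδ0, hδ1, hδ, hδact⟩ := exists_loop_twice (Sc_add_intVec hS.2.1 c) hn hγ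
  have hN : 2 ≤ n + n := by omega
  have hδact' : act (Sc S c) (n + n) δ < ↑(n + n) * holVal (Sc S c) + 2 * η := by
    rw [hδact]
    push_cast
    unfold actTilde at hact
    linarith
  have hnear : ∀ w, S (δ 0, δ 1) + S (δ 1, δ 2) < S (δ 0, w) + S (w, δ 2) + 2 * η := fun w => by
    have h := add_lt_add_of_act_lt hF hN hδ hδact' w
    rw [Sc_add_Sc, Sc_add_Sc] at h
    linarith
  obtain ⟨w, hw, hgrad⟩ := exists_dist_lt_norm_le_of_forall_lt_add
    (fun w => (hasFDerivAt_D2 hd (δ 0) w).add (hasFDerivAt_D1 hd w (δ 2))) (half_pos hε) hnear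
  have hb : dist (δ 1) y < η := by rwa [hδ1, dist_comm, dist_eq_norm]
  refine ⟨δ 0, δ 1, w, δ 2, ?_, by linarith, ?_, ?_, ?_⟩
  · rw [hδ0, dist_comm, dist_eq_norm]
    linarith
  · linarith [dist_triangle w (δ 1) y]
  · refine hgrad.trans ?_
    rw [div_le_iff₀ (half_pos hε)]
    nlinarith
  · have h := sub_lt_holVal_add_of_act_lt hF hN hδ hδact'
    have hSc : Sc S c (δ 0, δ 2) = S (δ 0, δ 2) + c (δ 0 - δ 2) := rfl
    rw [Sc_add_Sc, hSc] at h
    linarith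

end Aubry

theorem stmt_14_general (d : ℕ) (S : Ed d × Ed d → ℝ) (hS : IsGenFn S)
    (c : Ed d →L[ℝ] ℝ) (x y z : Ed d)
    (hxy : (x, y) ∈ aubry (Sc S c)) (hz : D2 S x y + D1 S y z = 0) :
    S (x, y) + S (y, z) - S (x, z) ≤ holVal (Sc S c) := by
  obtain ⟨A, hA, htw⟩ := hS.2.2
  choose a b w v ha hb hw hgrad hE using
    fun k : ℕ => exists_approx_of_mem_aubry hS hxy (Nat.one_div_pos_of_nat (n := k))
  have hε : Tendsto (fun k : ℕ => 1 / ((k : ℝ) + 1)) atTop (𝓝 0) :=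
    tendsto_one_div_add_atTop_nhds_zero_nat
  have hlim : ∀ {u : ℕ → Ed d} {p : Ed d}, (∀ k, dist (u k) p < 1 / ((k : ℝ) + 1)) →
      Tendsto u atTop (𝓝 p) := fun h =>
    tendsto_iff_dist_tendsto_zero.2 (squeeze_zero (fun _ => dist_nonneg) (fun k => (h k).le) hε)
  have hgrad' : Tendsto (fun k => D2 S (a k) (w k) + D1 S (w k) (v k)) atTop (𝓝 0) :=
    tendsto_zero_iff_norm_tendsto_zero.2 (squeeze_zero (fun _ => norm_nonneg _) hgrad hε)
  have hD2 : Tendsto (fun k => D2 S (a k) (w k)) atTop (𝓝 (D2 S x y)) :=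
    ((continuous_D2 (hS.1.of_le one_le_two)).tendsto (x, y)).comp ((hlim ha).prodMk_nhds (hlim hw))
  have hv : Tendsto v atTop (𝓝 z) := by
    refine tendsto_of_tendsto_D1 hS.1 htw hA (hlim hw) ?_
    convert hgrad'.sub hD2 using 1
    · simp
    · rw [eq_neg_of_add_eq_zero_right hz, zero_sub]
  have hcont : Continuous fun q : Ed d × Ed d × Ed d =>
      S (q.1, q.2.1) + S (q.2.1, q.2.2) - S (q.1, q.2.2) := by
    have := hS.1.continuous
    fun_prop
  exact le_of_tendsto_of_tendsto'
    ((hcont.tendsto (x, y, z)).comp ((hlim ha).prodMk_nhds ((hlim hb).prodMk_nhds hv)))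
    (by simpa using hε.const_add (holVal (Sc S c))) fun k => (hE k).le

/-- Let `c ∈ (ℝ^d)*`, `(x,y) ∈ Ā_c`, and let `z` be determined by
`∂₂S(x,y) + ∂₁S(y,z) = 0` (so that `(y,z) = φ(x,y)`). Then
`Σ̃_c ≥ S(x,y) + S(y,z) - S(x,z)`. -/
theorem stmt_14 (d : ℕ) (hd : 1 ≤ d) (S : Ed d × Ed d → ℝ) (hS : IsGenFn S)
    (c : Ed d →L[ℝ] ℝ) (x y z : Ed d)
    (hxy : (x, y) ∈ aubry (Sc S c)) (hz : D2 S x y + D1 S y z = 0) :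
    S (x, y) + S (y, z) - S (x, z) ≤ holVal (Sc S c) :=
  stmt_14_general d S hS c x y z hxy hz
end
end
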